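/- arXiv:2510.10540 — 2 statements merged into one kernel-verified Lean document; each statement's English description precedes it below -/
import Mathlib

section
/- Let K be a number field of degree d and β_K ≥ 3 an integer. Then 0 ≤ ∑_{𝔭} (ln N(𝔭))/(N(𝔭)^{β_K} − 1) ≤ d·(1/2^{β_K −1} + 1/((β_K −2)·2^{β_K −2})), where the sum ranges over the nonzero prime ideals 𝔭 of O_K. In particular the sum converges and tends to 0 exponentially fast as β_K → ∞. -/
/-!
Each nonzero prime `𝔭` lies over the rational prime `p = N(𝔭 ∩ ℤ)`, with `p ≤ N 𝔭`, and at most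
`d` primes lie over a given `p` (their `e·f` sum to `d`). Since `ln x ≤ x - 1`, the term of `𝔭`
is at most `1 / N(𝔭)^(β-1) ≤ 1 / p^(β-1)`, so every partial sum is bounded by `d ∑_p p^(1-β)`,
and comparing `∑_{n ≥ 3} n^(1-β)` with `∫₂^∞ u^(1-β) du = 1 / ((β-2) 2^(β-2))` gives the bound.
-/

open NumberField Finset

theorem Finset.sum_comp_le_mul_sum_image {ι κ : Type*} [DecidableEq κ] (s : Finset ι)
    (c : ι → κ) (g : κ → ℝ) (d : ℕ) (hg : ∀ b ∈ s.image c, 0 ≤ g b)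
    (hfiber : ∀ b ∈ s.image c, #{a ∈ s | c a = b} ≤ d) :
    ∑ a ∈ s, g (c a) ≤ d * ∑ b ∈ s.image c, g b := by
  rw [sum_comp, mul_sum]
  gcongr with b hb
  rw [nsmul_eq_mul]
  exact mul_le_mul_of_nonneg_right (by exact_mod_cast hfiber b hb) (hg b hb)

theorem Real.log_div_pow_succ_sub_one_le {x : ℝ} (hx : 1 < x) (k : ℕ) :
    log x / (x ^ (k + 1) - 1) ≤ 1 / x ^ k := by
  have hxk : 1 ≤ x ^ k := one_le_pow₀ hx.le
  have hden : 0 < x ^ (k + 1) - 1 := by linarith [one_lt_pow₀ hx (by omega : k + 1 ≠ 0)]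
  rw [div_le_div_iff₀ hden (by positivity), one_mul]
  calc log x * x ^ k ≤ (x - 1) * x ^ k :=
        mul_le_mul_of_nonneg_right (log_le_sub_one_of_pos (by linarith)) (by positivity)
    _ = x ^ (k + 1) - x ^ k := by ring
    _ ≤ x ^ (k + 1) - 1 := by linarith

theorem Real.sum_Ico_rpow_neg_le {s : ℝ} (hs : 1 < s) {a : ℕ} (ha : 0 < a) (b : ℕ) :
    ∑ n ∈ Ico a b, ((n + 1 : ℕ) : ℝ) ^ (-s) ≤ (a : ℝ) ^ (1 - s) / (s - 1) := by
  have ha' : (0 : ℝ) < a := by exact_mod_cast ha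
  have hanti : AntitoneOn (fun x : ℝ ↦ x ^ (-s)) (Set.Icc a b) :=
    (antitoneOn_rpow_Ioi_of_exponent_nonpos (by linarith)).mono fun x hx ↦ ha'.trans_le hx.1
  calc _ ≤ ∫ x in Set.Ioi (a : ℝ), x ^ (-s) :=
        hanti.sum_Ico_le_integral (integrableOn_Ioi_rpow_of_lt (by linarith) ha')
          fun x hx ↦ rpow_nonneg (ha'.trans hx).le _
    _ = _ := by
      rw [integral_Ioi_rpow_of_lt (by linarith) ha', show -s + 1 = 1 - s by ring, neg_div,
        ← div_neg, neg_sub]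

theorem sum_one_div_pow_succ_le {k : ℕ} (hk : 1 ≤ k) (Q : Finset ℕ) (hQ : ∀ n ∈ Q, 2 ≤ n) :
    ∑ n ∈ Q, 1 / (n : ℝ) ^ (k + 1) ≤ 1 / 2 ^ (k + 1) + 1 / (k * 2 ^ k) := by
  set M := max 2 (Q.sup id)
  have hsub : Q ⊆ Icc 2 M := fun n hn ↦
    mem_Icc.mpr ⟨hQ n hn, (le_sup (f := id) hn).trans (le_max_right _ _)⟩
  have hpow (n : ℕ) : (n : ℝ) ^ (-((k + 1 : ℕ) : ℝ)) = 1 / (n : ℝ) ^ (k + 1) := by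
    rw [Real.rpow_neg (Nat.cast_nonneg n), Real.rpow_natCast, one_div]
  have htail : ∑ n ∈ Ioc 2 M, 1 / (n : ℝ) ^ (k + 1) ≤ 1 / (k * 2 ^ k) := by
    have := Real.sum_Ico_rpow_neg_le (s := ((k + 1 : ℕ) : ℝ)) (by norm_cast; omega) two_pos M
    rw [← Ico_add_one_add_one_eq_Ioc, ← sum_Ico_add' (c := 1)]
    simp only [hpow] at this
    convert this using 1
    rw [Nat.cast_ofNat, Nat.cast_add, Nat.cast_one, add_sub_cancel_right,
      show (1 : ℝ) - (k + 1) = -k by ring, Real.rpow_neg two_pos.le, Real.rpow_natCast]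
    field_simp
  calc ∑ n ∈ Q, 1 / (n : ℝ) ^ (k + 1) ≤ ∑ n ∈ Icc 2 M, 1 / (n : ℝ) ^ (k + 1) :=
        sum_le_sum_of_subset_of_nonneg hsub fun _ _ _ ↦ by positivity
    _ = 1 / 2 ^ (k + 1) + ∑ n ∈ Ioc 2 M, 1 / (n : ℝ) ^ (k + 1) := by
        rw [Icc_eq_cons_Ioc (le_max_left _ _), sum_cons, Nat.cast_ofNat]
    _ ≤ _ := by gcongr

theorem Ideal.ncard_primesOver_le_finrank {R S : Type*} [CommRing R] [IsDomain R] [CommRing S]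
    [Algebra R S] [Module.Finite R S] [Module.Flat R S] (p : Ideal R) [p.IsPrime] :
    (p.primesOver S).ncard ≤ Module.finrank R S := by
  have := (Algebra.QuasiFinite.finite_primesOver (S := S) p).fintype
  rw [← p.sum_ramification_inertia_eq_finrank S, Set.ncard_eq_toFinset_card', Set.toFinset_card,
    Fintype.card_eq_sum_ones]
  refine sum_le_sum fun q _ ↦ ?_
  have := q.2.1
  exact Nat.mul_pos (q.1.ramificationIdx_pos R) (q.1.inertiaDeg_pos R)

theorem Ideal.absNorm_under_le_absNorm {S : Type*} [CommRing S] [IsDedekindDomain S]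
    [Module.Free ℤ S] [Module.Finite ℤ S] {P : Ideal S} (hP : P ≠ ⊥) :
    absNorm (P.under ℤ) ≤ absNorm P :=
  Nat.le_of_dvd (Nat.pos_of_ne_zero (absNorm_eq_zero_iff.not.mpr hP))
    (Int.absNorm_under_dvd_absNorm P)

namespace NumberField

theorem card_filter_absNorm_under_eq_le_finrank (K : Type*) [Field K] [NumberField K]
    (S : Finset {P : Ideal (𝓞 K) // P.IsPrime ∧ P ≠ ⊥}) {q : ℕ} (hq : q.Prime) :
    #{P ∈ S | Ideal.absNorm (P.1.under ℤ) = q} ≤ Module.finrank ℚ K := by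
  have : (Ideal.span {(q : ℤ)}).IsPrime :=
    (Ideal.span_singleton_prime (by exact_mod_cast hq.ne_zero)).mpr (Nat.prime_iff_prime_int.mp hq)
  rw [← RingOfIntegers.rank, ← Set.ncard_coe_finset]
  refine (Set.ncard_le_ncard_of_injOn Subtype.val (fun P hP ↦ ?_) Subtype.val_injective.injOn
    (Algebra.QuasiFinite.finite_primesOver (S := 𝓞 K) (Ideal.span {(q : ℤ)}))).trans
      (Ideal.ncard_primesOver_le_finrank _)
  obtain ⟨-, hPq⟩ := mem_filter.mp hP
  have hlies := Int.liesOver_span_absNorm P.1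
  rw [hPq] at hlies
  exact ⟨P.2.1, hlies⟩

theorem sum_log_absNorm_div_pow_sub_one_le (K : Type*) [Field K] [NumberField K]
    {k : ℕ} (hk : 1 ≤ k) (S : Finset {P : Ideal (𝓞 K) // P.IsPrime ∧ P ≠ ⊥}) :
    ∑ P ∈ S, Real.log (Ideal.absNorm P.1) / ((Ideal.absNorm P.1 : ℝ) ^ (k + 2) - 1) ≤
      Module.finrank ℚ K * (1 / 2 ^ (k + 1) + 1 / (k * 2 ^ k)) := by
  set p : {P : Ideal (𝓞 K) // P.IsPrime ∧ P ≠ ⊥} → ℕ := fun P ↦ Ideal.absNorm (P.1.under ℤ)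
  have hp (P : {P : Ideal (𝓞 K) // P.IsPrime ∧ P ≠ ⊥}) : (p P).Prime :=
    have := P.2.1
    have : NeZero P.1 := ⟨P.2.2⟩
    Nat.absNorm_under_prime P.1
  have hterm (P : {P : Ideal (𝓞 K) // P.IsPrime ∧ P ≠ ⊥}) :
      Real.log (Ideal.absNorm P.1) / ((Ideal.absNorm P.1 : ℝ) ^ (k + 2) - 1) ≤
        1 / (p P : ℝ) ^ (k + 1) := by
    have hpN : (p P : ℝ) ≤ Ideal.absNorm P.1 := by
      exact_mod_cast Ideal.absNorm_under_le_absNorm P.2.2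
    have hp1 : (1 : ℝ) < p P := by exact_mod_cast (hp P).one_lt
    refine (Real.log_div_pow_succ_sub_one_le (hp1.trans_le hpN) (k + 1)).trans ?_
    gcongr
  calc _ ≤ ∑ P ∈ S, 1 / (p P : ℝ) ^ (k + 1) := sum_le_sum fun P _ ↦ hterm P
    _ ≤ Module.finrank ℚ K * ∑ q ∈ S.image p, 1 / (q : ℝ) ^ (k + 1) := by
        refine S.sum_comp_le_mul_sum_image p (fun q ↦ 1 / (q : ℝ) ^ (k + 1)) _
          (fun _ _ ↦ by positivity) fun q hq ↦ ?_
        obtain ⟨P, -, rfl⟩ := mem_image.mp hq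
        exact card_filter_absNorm_under_eq_le_finrank K S (hp P)
    _ ≤ _ := by
        gcongr
        refine sum_one_div_pow_succ_le hk _ fun q hq ↦ ?_
        obtain ⟨P, -, rfl⟩ := mem_image.mp hq
        exact (hp P).two_le

end NumberField

/-- For a number field `K` of degree `d` and an integer `β_K ≥ 3`, the sum
`∑_𝔭 (ln N(𝔭))/(N(𝔭)^{β_K} − 1)` over nonzero prime ideals of `O_K` converges, is
nonnegative, and is at most `d·(1/2^{β_K−1} + 1/((β_K−2)·2^{β_K−2}))`; in particular it
tends to `0` exponentially fast as `β_K → ∞`. -/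
theorem prime_ideal_log_sum_bound (K : Type*) [Field K] [NumberField K]
    (d : ℕ) (hd : d = Module.finrank ℚ K) (βK : ℕ) (hβ : 3 ≤ βK) :
    Summable (fun P : {P : Ideal (𝓞 K) // P.IsPrime ∧ P ≠ ⊥} =>
      Real.log (Ideal.absNorm P.1) / ((Ideal.absNorm P.1 : ℝ) ^ βK - 1)) ∧
    0 ≤ ∑' P : {P : Ideal (𝓞 K) // P.IsPrime ∧ P ≠ ⊥},
        Real.log (Ideal.absNorm P.1) / ((Ideal.absNorm P.1 : ℝ) ^ βK - 1) ∧
    ∑' P : {P : Ideal (𝓞 K) // P.IsPrime ∧ P ≠ ⊥},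
        Real.log (Ideal.absNorm P.1) / ((Ideal.absNorm P.1 : ℝ) ^ βK - 1) ≤
      (d : ℝ) * (1 / 2 ^ (βK - 1) + 1 / (((βK : ℝ) - 2) * 2 ^ (βK - 2))) := by
  obtain ⟨k, rfl⟩ : ∃ k, βK = k + 2 := ⟨βK - 2, by omega⟩
  have hpartial := sum_log_absNorm_div_pow_sub_one_le K (k := k) (by omega)
  have hnonneg (P : {P : Ideal (𝓞 K) // P.IsPrime ∧ P ≠ ⊥}) :
      0 ≤ Real.log (Ideal.absNorm P.1) / ((Ideal.absNorm P.1 : ℝ) ^ (k + 2) - 1) := by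
    have h1 : (1 : ℝ) ≤ Ideal.absNorm P.1 := by
      exact_mod_cast Nat.one_le_iff_ne_zero.mpr (Ideal.absNorm_eq_zero_iff.not.mpr P.2.2)
    exact div_nonneg (Real.log_nonneg h1) (sub_nonneg.mpr (one_le_pow₀ h1))
  have hsum := summable_of_sum_le hnonneg hpartial
  refine ⟨hsum, tsum_nonneg hnonneg, ?_⟩
  rw [hd, show k + 2 - 1 = k + 1 by omega, Nat.add_sub_cancel, Nat.cast_add, Nat.cast_two,
    add_sub_cancel_right]
  exact hsum.tsum_le_of_sum_le hpartial
end

section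
/- The log-volume of the n-dimensional Euclidean unit ball satisfies ln vol(B_n) = (n/2)·ln π − ln Γ(1 + n/2), and consequently lgh_ℚ(n) := (1/n)·(ln 2 − γ − ln vol(B_n)) satisfies lgh_ℚ(n) = (ln n)/2 − (ln(2πe))/2 + (ln n)/(2n) + (ln(4π) − 2γ)/(2n) + o(1/n) as n → ∞. -/
open Filter Asymptotics MeasureTheory

/-- The volume of the unit ball in `ℝ^n`. -/
noncomputable def unitBallVol (n : ℕ) : ℝ :=
  (volume (Metric.ball (0 : EuclideanSpace ℝ (Fin n)) 1)).toReal

/-- `lgh_ℚ(n) = (1/n)·(ln 2 − γ − ln vol(B_n))`. -/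
noncomputable def lghQ (n : ℕ) : ℝ :=
  (1 / (n : ℝ)) * (Real.log 2 - Real.eulerMascheroniConstant - Real.log (unitBallVol n))

/-!
Since `Γ(1 + n/2) = (n/2)·Γ(n/2)`, the error of the stated expansion of `lgh_ℚ(n)`, multiplied
by `n`, is exactly the remainder of Stirling's formula for `log Γ` at `n/2`. At integers this
remainder tends to `0` by Stirling's formula for `n!`; Legendre's duplication formula
`Γ(x)Γ(x + 1/2) = 2^(1-2x)·√π·Γ(2x)` carries this over to the half-integers.
-/

open Real Topology
open scoped Nat

noncomputable def stirlingError (x : ℝ) : ℝ :=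
  log (Gamma x) - (x * log x - x - log x / 2 + log (2 * π) / 2)

lemma log_Gamma_add_one {x : ℝ} (hx : 0 < x) : log (Gamma (x + 1)) = log x + log (Gamma x) := by
  rw [Gamma_add_one hx.ne', log_mul hx.ne' (Gamma_pos_of_pos hx).ne']

lemma stirlingError_natCast {n : ℕ} (hn : n ≠ 0) :
    stirlingError n = log (Stirling.stirlingSeq n) - log √π := by
  have hn₀ : (0 : ℝ) < n := by positivity
  have hfac : log (n ! : ℝ) = log n + log (Gamma n) := by
    rw [← Gamma_nat_eq_factorial, ← log_Gamma_add_one hn₀]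
  rw [stirlingError, Stirling.log_stirlingSeq_formula, hfac, log_sqrt pi_pos.le,
    log_mul two_ne_zero hn₀.ne', log_mul two_ne_zero pi_pos.ne', log_div hn₀.ne' (exp_pos 1).ne',
    log_exp]
  ring

lemma tendsto_stirlingError_natCast :
    Tendsto (fun n : ℕ => stirlingError n) atTop (𝓝 0) := by
  have h := (Stirling.tendsto_stirlingSeq_sqrt_pi.log (by positivity)).sub_const (log √π)
  rw [sub_self] at h
  refine h.congr' ?_
  filter_upwards [eventually_ne_atTop 0] with n hn
  exact (stirlingError_natCast hn).symm

lemma stirlingError_add_half {x : ℝ} (hx : 0 < x) :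
    stirlingError (x + 1 / 2) =
      stirlingError (2 * x) - stirlingError x - (x * log (1 + (1 / 2) / x) - 1 / 2) := by
  have hduplication : log (Gamma (x + 1 / 2)) =
      log (Gamma (2 * x)) + (1 - 2 * x) * log 2 + log π / 2 - log (Gamma x) := by
    have h := congrArg log (Gamma_mul_Gamma_add_half x)
    rw [log_mul (Gamma_pos_of_pos hx).ne' (Gamma_pos_of_pos (by linarith)).ne',
      log_mul (by positivity) (by positivity),
      log_mul (Gamma_pos_of_pos (by linarith)).ne' (by positivity), log_rpow two_pos, log_sqrt pi_pos.le] at h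
    linarith
  have hlog : log (1 + (1 / 2) / x) = log (x + 1 / 2) - log x := by
    rw [← log_div (by linarith) hx.ne']
    congr 1
    field_simp
  rw [stirlingError, stirlingError, stirlingError, hduplication, hlog,
    log_mul two_ne_zero hx.ne', log_mul two_ne_zero pi_pos.ne']
  ring

lemma tendsto_stirlingError_natCast_add_half :
    Tendsto (fun n : ℕ => stirlingError (n + 1 / 2)) atTop (𝓝 0) := by
  have hdouble : Tendsto (fun n : ℕ => stirlingError ((2 * n : ℕ) : ℝ)) atTop (𝓝 0) :=
    tendsto_stirlingError_natCast.comp (tendsto_id.const_mul_atTop' two_pos)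
  have hcorrection := ((tendsto_mul_log_one_add_div_atTop (1 / 2)).comp
    tendsto_natCast_atTop_atTop).sub_const (1 / 2)
  have h := (hdouble.sub tendsto_stirlingError_natCast).sub hcorrection
  rw [sub_self, sub_self, sub_self] at h
  refine h.congr' ?_
  filter_upwards [eventually_ne_atTop 0] with n hn
  rw [stirlingError_add_half (by positivity)]
  push_cast
  rfl

lemma Nat.tendsto_of_tendsto_two_mul_of_tendsto_two_mul_add_one {α : Type*} {f : ℕ → α}
    {l : Filter α} (heven : Tendsto (fun n => f (2 * n)) atTop l)
    (hodd : Tendsto (fun n => f (2 * n + 1)) atTop l) : Tendsto f atTop l := by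
  intro s hs
  obtain ⟨N₁, hN₁⟩ := eventually_atTop.1 (heven hs)
  obtain ⟨N₂, hN₂⟩ := eventually_atTop.1 (hodd hs)
  refine eventually_atTop.2 ⟨2 * (N₁ + N₂), fun n hn => ?_⟩
  obtain ⟨k, rfl | rfl⟩ := n.even_or_odd'
  · exact hN₁ k (by omega)
  · exact hN₂ k (by omega)

lemma tendsto_stirlingError_natCast_div_two :
    Tendsto (fun n : ℕ => stirlingError (n / 2)) atTop (𝓝 0) := by
  refine Nat.tendsto_of_tendsto_two_mul_of_tendsto_two_mul_add_one ?_ ?_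
  · convert tendsto_stirlingError_natCast using 3
    push_cast
    ring
  · convert tendsto_stirlingError_natCast_add_half using 3
    push_cast
    ring

lemma log_unitBallVol {n : ℕ} (hn : n ≠ 0) :
    log (unitBallVol n) = (n / 2) * log π - log (Gamma (1 + n / 2)) := by
  have : Nonempty (Fin n) := ⟨⟨0, Nat.pos_of_ne_zero hn⟩⟩
  have hΓ : 0 < Gamma (n / 2 + 1) := Gamma_pos_of_pos (by positivity)
  rw [unitBallVol, EuclideanSpace.volume_ball, Fintype.card_fin, ENNReal.ofReal_one, one_pow,
    one_mul, ENNReal.toReal_ofReal (by positivity), log_div (by positivity) hΓ.ne', log_pow,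
    log_sqrt pi_pos.le, add_comm]
  ring

lemma natCast_mul_lghQ_sub_expansion {n : ℕ} (hn : n ≠ 0) :
    n * (lghQ n - (log n / 2 - log (2 * π * exp 1) / 2 + log n / (2 * n)
        + (log (4 * π) - 2 * eulerMascheroniConstant) / (2 * n))) = stirlingError (n / 2) := by
  have hn₀ : (0 : ℝ) < n := by positivity
  rw [lghQ, stirlingError, log_unitBallVol hn, add_comm 1, log_Gamma_add_one (by positivity),
    log_div hn₀.ne' two_ne_zero, log_mul (by positivity) (exp_pos 1).ne',
    log_mul two_ne_zero pi_pos.ne', log_exp, show (4 : ℝ) * π = 2 ^ 2 * π by norm_num,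
    log_mul (by positivity) pi_pos.ne', log_pow]
  field_simp
  ring

/-- The log-volume of the `n`-dimensional unit ball is
`ln vol(B_n) = (n/2)·ln π − ln Γ(1 + n/2)`, and consequently
`lgh_ℚ(n) = (ln n)/2 − (ln(2πe))/2 + (ln n)/(2n) + (ln(4π) − 2γ)/(2n) + o(1/n)`
as `n → ∞`. -/
theorem unitBallVol_log_and_lghQ_asymptotic :
    (∀ n : ℕ, 1 ≤ n →
      Real.log (unitBallVol n) =
        ((n : ℝ) / 2) * Real.log Real.pi - Real.log (Real.Gamma (1 + (n : ℝ) / 2))) ∧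
    (fun n : ℕ =>
        lghQ n - (Real.log n / 2 - Real.log (2 * Real.pi * Real.exp 1) / 2
          + Real.log n / (2 * n)
          + (Real.log (4 * Real.pi) - 2 * Real.eulerMascheroniConstant) / (2 * n)))
      =o[atTop] (fun n : ℕ => 1 / (n : ℝ)) := by
  refine ⟨fun n hn => log_unitBallVol (Nat.one_le_iff_ne_zero.1 hn), ?_⟩
  rw [isLittleO_iff_tendsto']
  · refine tendsto_stirlingError_natCast_div_two.congr' ?_
    filter_upwards [eventually_ne_atTop 0] with n hn
    rw [div_div_eq_mul_div, div_one, mul_comm, natCast_mul_lghQ_sub_expansion hn]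
  · filter_upwards [eventually_ne_atTop 0] with n hn hzero
    exact absurd hzero (by positivity)
end
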